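/- Let T > 0, let a, b, c, f : (0,T) × (0,1) → ℝ with sup_{0<x<1, 0<t≤T} |f(t,x)| < +∞, let u ∈ C⁰([0,T] × [0,1]) with u[t] ∈ C²((0,1)) for almost all t ∈ (0,T), ∂u/∂t continuous on (0,T) × [0,1], ∂u/∂x(t,0) and ∂u/∂x(t,1) existing for all t ∈ (0,T], satisfying ∂u/∂t = a·∂²u/∂x² + b·∂u/∂x + c·u + f for almost all t and all x ∈ (0,1). Let μ₀ > 0, λ₀ ∈ ℝ be constants. Suppose a ≥ 0 on (0,T)×(0,1), there exist σ > 0 and η ∈ C²([0,1];(0,+∞)) with aη'' + bη' + (σ+c)η ≤ 0 on (0,T)×(0,1), and μ₀η'(0) − λ₀η(0) < 0. Then for all ζ ∈ [0,σ) and t ∈ (0,T]: ‖u[t]‖_{∞,η} ≤ max( exp(−ζt)·‖u[0]‖_{∞,η}, sup_{0<s≤t} max( r₀(s), r₁(s), ‖f[s]‖_{∞,η}/(σ−ζ) )·exp(−ζ(t−s)) ), where r₀(t) := min( |u(t,0)|/η(0), |μ₀·∂u/∂x(t,0) − λ₀·u(t,0)| / |μ₀η'(0) − λ₀η(0)| )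 and r₁(t) := |u(t,1)|/η(1). -/

import Mathlib

/-!
Put `v = e^{ζt} u` and fix a level `L` above the right-hand side of the estimate (multiplied by
`e^{ζt}`). The running maximum `M(t) = max(L, max_{|θ| ≤ 1, x} θ v(t, x) / η(x))` is Lipschitz on
compact subintervals of `(0, T)`, hence absolutely continuous, and by Danskin's argument its upper
right Dini derivative at a time where the equation holds is bounded by the time derivative of
`θ v / η` at a maximiser. Such a maximiser lies above the boundary data, so it is not at `x = 1`,
nor at `x = 0`, where `μ₀ η'(0) - λ₀ η(0) < 0` would force the Robin combination to be large. At an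
interior maximiser the first and second order conditions, `a η'' + b η' + (σ + c) η ≤ 0` and
`|f| ≤ (σ - ζ) L η` make the time derivative nonpositive. So `M` is nonincreasing, and `M = L`
near `t = 0`.
-/

open Set MeasureTheory Filter Topology NNReal Function Real

theorem IsLocalMax.hasDerivAt_deriv_nonpos {f f' : ℝ → ℝ} {x q : ℝ} (h : IsLocalMax f x)
    (hf : ∀ᶠ y in 𝓝 x, HasDerivAt f (f' y) y) (hf' : HasDerivAt f' q x) : q ≤ 0 := by
  by_contra! hq
  have hsign := eventually_nhdsWithin_sign_eq_of_deriv_pos (f := f') (by rwa [hf'.deriv])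
    (h.hasDerivAt_eq_zero hf.self_of_nhds)
  obtain ⟨δ, hδ, hball⟩ := Metric.eventually_nhds_iff.1 (hsign.and (hf.and h))
  have hright : ∀ y ∈ Icc x (x + δ / 2),
      SignType.sign (f' y) = SignType.sign (y - x) ∧ HasDerivAt f (f' y) y ∧ f y ≤ f x :=
    fun y hy => hball (by rw [Real.dist_eq, abs_of_nonneg (by linarith [hy.1])]; linarith [hy.2])
  obtain ⟨ξ, hξ, hslope⟩ := exists_hasDerivAt_eq_slope f f' (by linarith : x < x + δ / 2)
    (fun y hy => (hright y hy).2.1.continuousAt.continuousWithinAt)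
    (fun y hy => (hright y (Ioo_subset_Icc_self hy)).2.1)
  have hξpos : 0 < f' ξ := by
    have := (hright ξ (Ioo_subset_Icc_self hξ)).1
    rwa [sign_pos (by linarith [hξ.1] : 0 < ξ - x), sign_eq_one_iff] at this
  have hmax := (hright (x + δ / 2) (right_mem_Icc.2 (by linarith))).2.2
  rw [hslope, lt_div_iff₀ (by linarith)] at hξpos
  linarith

theorem IsMaxOn.hasDerivWithinAt_nonpos_of_left {f : ℝ → ℝ} {a b d : ℝ} (hab : a < b)
    (h : IsMaxOn f (Icc a b) a) (hf : HasDerivWithinAt f d (Icc a b) a) : d ≤ 0 := by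
  have := h.localize.hasFDerivWithinAt_nonpos hf.hasFDerivWithinAt
    (y := b - a) (mem_posTangentConeAt_of_segment_subset (by
      rw [add_sub_cancel, segment_eq_Icc hab.le]))
  simp only [ContinuousLinearMap.toSpanSingleton_apply, smul_eq_mul] at this
  exact nonpos_of_mul_nonpos_right this (sub_pos.2 hab)

theorem mul_le_mul_abs_of_abs_le {κ E w : ℝ} (hκ : |κ| ≤ E) : κ * w ≤ E * |w| :=
  (le_abs_self _).trans (by rw [abs_mul]; exact mul_le_mul_of_nonneg_right hκ (abs_nonneg w))

theorem linearOp_nonpos_of_isLocalMax_sub {V V' η η' : ℝ → ℝ} {x V'' η'' A B C F σ N : ℝ}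
    (hV : ∀ᶠ y in 𝓝 x, HasDerivAt V (V' y) y) (hV' : HasDerivAt V' V'' x)
    (hη : ∀ᶠ y in 𝓝 x, HasDerivAt η (η' y) y) (hη' : HasDerivAt η' η'' x)
    (hmax : IsLocalMax (fun y => V y - N * η y) x) (hVx : V x = N * η x)
    (hA : 0 ≤ A) (hN : 0 ≤ N) (hbarrier : A * η'' + B * η' x + (σ + C) * η x ≤ 0)
    (hF : F ≤ σ * N * η x) :
    A * V'' + B * V' x + C * V x + F ≤ 0 := by
  have hderiv : ∀ᶠ y in 𝓝 x, HasDerivAt (fun y => V y - N * η y) (V' y - N * η' y) y :=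
    (hV.and hη).mono fun y h => h.1.sub (h.2.const_mul N)
  have hfirst : V' x = N * η' x := sub_eq_zero.1 (hmax.hasDerivAt_eq_zero hderiv.self_of_nhds)
  have hsecond : A * V'' ≤ A * (N * η'') := mul_le_mul_of_nonneg_left
    (sub_nonpos.1 (hmax.hasDerivAt_deriv_nonpos hderiv (hV'.sub (hη'.const_mul N)))) hA
  calc A * V'' + B * V' x + C * V x + F ≤ N * (A * η'' + B * η' x + (σ + C) * η x) := by
        rw [hfirst, hVx]; linarith
    _ ≤ 0 := mul_nonpos_of_nonneg_of_nonpos hN hbarrier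

theorem le_min_robin_of_isMaxOn {U η : ℝ → ℝ} {a b U' η' κ N E μ ν : ℝ} (hab : a < b)
    (hU : HasDerivWithinAt U U' (Icc a b) a) (hη : HasDerivWithinAt η η' (Icc a b) a)
    (hmax : IsMaxOn (fun y => κ * U y - N * η y) (Icc a b) a) (ha : κ * U a = N * η a)
    (hκ : |κ| ≤ E) (hμ : 0 ≤ μ) (hηa : 0 < η a) (hrobin : μ * η' - ν * η a < 0) :
    N ≤ E * min (|U a| / η a) (|μ * U' - ν * U a| / |μ * η' - ν * η a|) := by
  have hslope : κ * U' ≤ N * η' := sub_nonpos.1 <|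
    hmax.hasDerivWithinAt_nonpos_of_left hab ((hU.const_mul κ).sub (hη.const_mul N))
  rw [mul_min_of_nonneg _ _ ((abs_nonneg κ).trans hκ), le_min_iff, ← mul_div_assoc,
    ← mul_div_assoc, le_div_iff₀ hηa, le_div_iff₀ (abs_pos.2 hrobin.ne), abs_of_neg hrobin]
  constructor
  · exact ha ▸ mul_le_mul_abs_of_abs_le hκ
  · calc N * -(μ * η' - ν * η a) ≤ -κ * (μ * U' - ν * U a) := by
          linear_combination mul_le_mul_of_nonneg_left hslope hμ - ν * ha
      _ ≤ E * |μ * U' - ν * U a| := mul_le_mul_abs_of_abs_le (by rwa [abs_neg])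

theorem le_of_lipschitzOnWith_of_ae_rightDini_nonpos {N : ℝ → ℝ} {C : ℝ≥0} {a b : ℝ} (hab : a ≤ b)
    (hN : LipschitzOnWith C N (Icc a b))
    (hdini : ∀ᵐ s, s ∈ Ioo a b → ∀ ε > 0, ∀ᶠ s' in 𝓝[>] s, N s' - N s ≤ ε * (s' - s)) :
    N b ≤ N a := by
  have hac : AbsolutelyContinuousOnInterval N a b :=
    LipschitzOnWith.absolutelyContinuousOnInterval (by rwa [uIcc_of_le hab])
  have hderiv : ∀ᵐ s ∂volume.restrict (Icc a b), deriv N s ≤ 0 := by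
    rw [← Measure.restrict_congr_set Ioo_ae_eq_Icc, ae_restrict_iff' measurableSet_Ioo]
    filter_upwards [hdini, hac.ae_differentiableAt] with s hs hdiff hsab
    have hslope := (hasDerivWithinAt_iff_tendsto_slope' (s := Ioi s) (lt_irrefl s)).1
      (hdiff (by rw [uIcc_of_le hab]; exact Ioo_subset_Icc_self hsab)).hasDerivAt.hasDerivWithinAt
    refine le_of_forall_pos_le_add fun ε hε => ?_
    rw [zero_add]
    refine le_of_tendsto hslope ?_
    filter_upwards [hs hsab ε hε, self_mem_nhdsWithin] with s' hs' hs's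
    rw [slope_def_field, div_le_iff₀ (sub_pos.2 hs's)]
    exact hs'
  have := intervalIntegral.integral_nonneg_of_ae_restrict hab
    (hderiv.mono fun s hs => neg_nonneg.2 hs)
  rw [intervalIntegral.integral_neg, hac.integral_deriv_eq_sub] at this
  linarith

theorem IsCompact.exists_le_and_le_of_tendsto {X : Type*} [TopologicalSpace X]
    [FirstCountableTopology X] {K : Set X} (hK : IsCompact K) {g g' : ℝ → X → ℝ} {S : Set ℝ}
    {s A ε : ℝ} (hs : s ∈ S) (hg : ContinuousOn ↿g (S ×ˢ K)) (hg' : ContinuousOn ↿g' (S ×ˢ K))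
    {τ ξ : ℕ → ℝ} {x : ℕ → X} (hτ : Tendsto τ atTop (𝓝[S] s)) (hξ : Tendsto ξ atTop (𝓝[S] s))
    (hx : ∀ n, x n ∈ K) (hgA : ∀ n, A ≤ g (τ n) (x n)) (hg'ε : ∀ n, ε ≤ g' (ξ n) (x n)) :
    ∃ x₀ ∈ K, A ≤ g s x₀ ∧ ε ≤ g' s x₀ := by
  obtain ⟨x₀, hx₀, φ, hφ, hx_lim⟩ := hK.tendsto_subseq hx
  have hlim : ∀ {σ : ℕ → ℝ} {h : ℝ → X → ℝ}, Tendsto σ atTop (𝓝[S] s) →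
      ContinuousOn ↿h (S ×ˢ K) → Tendsto (fun n => h (σ (φ n)) (x (φ n))) atTop (𝓝 (h s x₀)) :=
    fun hσ hh => (hh (s, x₀) ⟨hs, hx₀⟩).tendsto.comp <| tendsto_nhdsWithin_iff.2
      ⟨((tendsto_nhdsWithin_iff.1 hσ).1.comp hφ.tendsto_atTop).prodMk_nhds hx_lim,
        (hφ.tendsto_atTop.eventually (tendsto_nhdsWithin_iff.1 hσ).2).mono fun n h => ⟨h, hx _⟩⟩
  exact ⟨x₀, hx₀, ge_of_tendsto (hlim hτ hg) (.of_forall fun n => hgA _),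
    ge_of_tendsto (hlim hξ hg') (.of_forall fun n => hg'ε _)⟩

theorem rightDini_nonpos_of_maximizers {X : Type*} [TopologicalSpace X]
    [FirstCountableTopology X] {K : Set X} (hK : IsCompact K) {g g' : ℝ → X → ℝ} {M : ℝ → ℝ}
    {s b : ℝ} (hsb : s < b)
    (hg : ContinuousOn ↿g (Ico s b ×ˢ K)) (hg' : ContinuousOn ↿g' (Ico s b ×ˢ K))
    (hderiv : ∀ τ ∈ Ico s b, ∀ x ∈ K, HasDerivAt (g · x) (g' τ x) τ)
    (hle : ∀ x ∈ K, g s x ≤ M s)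
    (hattain : ∀ τ ∈ Ioo s b, M s < M τ → ∃ x ∈ K, g τ x = M τ)
    (hmax : ∀ x ∈ K, g s x = M s → g' s x ≤ 0) :
    ∀ ε > 0, ∀ᶠ τ in 𝓝[>] s, M τ - M s ≤ ε * (τ - s) := by
  intro ε hε
  by_contra hfreq
  have hbad : ∃ᶠ τ in 𝓝[>] s, τ ∈ Ioo s b ∧ ε * (τ - s) < M τ - M s :=
    ((not_eventually.1 hfreq).and_eventually (Ioo_mem_nhdsGT hsb)).mono
      fun τ h => ⟨h.2, not_le.1 h.1⟩
  obtain ⟨τ, hτ_lim, hτ⟩ := exists_seq_forall_of_frequently hbad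
  have hstep : ∀ n, ∃ x ∈ K, M s ≤ g (τ n) x ∧ ∃ ξ ∈ Ioo s (τ n), ε ≤ g' ξ x := by
    intro n
    obtain ⟨hτs, hτM⟩ := hτ n
    have hpos : 0 < τ n - s := sub_pos.2 hτs.1
    obtain ⟨x, hxK, hx⟩ := hattain (τ n) hτs (by nlinarith)
    obtain ⟨ξ, hξ, hslope⟩ := exists_hasDerivAt_eq_slope (g · x) (g' · x) hτs.1
      (fun σ hσ => (hderiv σ ⟨hσ.1, hσ.2.trans_lt hτs.2⟩ x hxK).continuousAt.continuousWithinAt)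
      (fun σ hσ => hderiv σ ⟨hσ.1.le, hσ.2.trans hτs.2⟩ x hxK)
    refine ⟨x, hxK, by nlinarith, ξ, hξ, ?_⟩
    rw [hslope, le_div_iff₀ hpos]
    linarith [hle x hxK]
  -- The maximisers at `τ n` accumulate at a maximiser at time `s` where `g' ≥ ε`.
  choose x hxK hx ξ hξ hξε using hstep
  have hτ' : Tendsto τ atTop (𝓝[Ico s b] s) := tendsto_nhdsWithin_iff.2
    ⟨(tendsto_nhdsWithin_iff.1 hτ_lim).1, .of_forall fun n => Ioo_subset_Ico_self (hτ n).1⟩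
  have hξ' : Tendsto ξ atTop (𝓝[Ico s b] s) := tendsto_nhdsWithin_iff.2
    ⟨tendsto_of_tendsto_of_tendsto_of_le_of_le tendsto_const_nhds (tendsto_nhdsWithin_iff.1 hτ').1
      (fun n => (hξ n).1.le) (fun n => (hξ n).2.le),
      .of_forall fun n => ⟨(hξ n).1.le, (hξ n).2.trans (hτ n).1.2⟩⟩
  obtain ⟨x₀, hx₀, hgx₀, hg'x₀⟩ :=
    hK.exists_le_and_le_of_tendsto (left_mem_Ico.2 hsb) hg hg' hτ' hξ' hxK hx hξε
  linarith [hmax x₀ hx₀ (le_antisymm (hle x₀ hx₀) hgx₀)]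

theorem LipschitzOnWith.max_sSup_image {X : Type*} {K : Set X} (hK : K.Nonempty)
    {g : ℝ → X → ℝ} {I : Set ℝ} {C : ℝ≥0} (L : ℝ) (hbdd : ∀ s ∈ I, BddAbove (g s '' K))
    (hg : ∀ x ∈ K, LipschitzOnWith C (g · x) I) :
    LipschitzOnWith C (fun s => max L (sSup (g s '' K))) I := by
  refine LipschitzOnWith.of_le_add_mul C fun s hs s' hs' => ?_
  have hdist : 0 ≤ (C : ℝ) * dist s s' := by positivity
  refine max_le (by linarith [le_max_left L (sSup (g s' '' K))]) ?_
  refine csSup_le (hK.image _) ?_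
  rintro _ ⟨x, hx, rfl⟩
  linarith [(hg x hx).le_add_mul hs hs', le_csSup (hbdd s' hs') (mem_image_of_mem _ hx),
    le_max_right L (sSup (g s' '' K))]

theorem max_sSup_image_le_of_maximizers {X : Type*} [TopologicalSpace X]
    [FirstCountableTopology X] {K : Set X} (hK : IsCompact K) (hKne : K.Nonempty)
    {g g' : ℝ → X → ℝ} {a b L : ℝ} (hab : a ≤ b)
    (hg : ContinuousOn ↿g (Icc a b ×ˢ K)) (hg' : ContinuousOn ↿g' (Icc a b ×ˢ K))
    (hderiv : ∀ τ ∈ Icc a b, ∀ x ∈ K, HasDerivAt (g · x) (g' τ x) τ)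
    (hmax : ∀ᵐ s, s ∈ Ioo a b → ∀ x ∈ K, (∀ y ∈ K, g s y ≤ g s x) → L ≤ g s x → g' s x ≤ 0) :
    max L (sSup (g b '' K)) ≤ max L (sSup (g a '' K)) := by
  set M : ℝ → ℝ := fun s => max L (sSup (g s '' K))
  have hslice : ∀ s ∈ Icc a b, ContinuousOn (g s) K := fun s hs =>
    hg.comp (Continuous.prodMk_right s).continuousOn fun x hx => ⟨hs, hx⟩
  have hle : ∀ s ∈ Icc a b, ∀ x ∈ K, g s x ≤ M s := fun s hs x hx =>
    (le_csSup (hK.bddAbove_image (hslice s hs)) (mem_image_of_mem _ hx)).trans (le_max_right _ _)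
  obtain ⟨C, hC⟩ := (isCompact_Icc.prod hK).exists_bound_of_continuousOn hg'
  have hlip : LipschitzOnWith C.toNNReal M (Icc a b) := by
    refine .max_sSup_image hKne L (fun s hs => hK.bddAbove_image (hslice s hs)) fun x hx => ?_
    refine (convex_Icc a b).lipschitzOnWith_of_nnnorm_hasDerivWithin_le
      (fun s hs => (hderiv s hs x hx).hasDerivWithinAt) fun s hs => ?_
    rw [← NNReal.coe_le_coe, coe_nnnorm, Real.coe_toNNReal']
    exact (hC (s, x) ⟨hs, hx⟩).trans (le_max_left _ _)
  refine le_of_lipschitzOnWith_of_ae_rightDini_nonpos (N := M) hab hlip ?_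
  filter_upwards [hmax] with s hs hsab
  have hIco : Ico s b ⊆ Icc a b := fun τ hτ => ⟨hsab.1.le.trans hτ.1, hτ.2.le⟩
  have hs_mem : s ∈ Icc a b := hIco (left_mem_Ico.2 hsab.2)
  refine rightDini_nonpos_of_maximizers hK hsab.2 (hg.mono (prod_mono hIco subset_rfl))
    (hg'.mono (prod_mono hIco subset_rfl)) (fun τ hτ => hderiv τ (hIco hτ)) (hle s hs_mem) ?_
    fun x hx hx_eq => hs hsab x hx (fun y hy => hx_eq ▸ hle s hs_mem y hy) (hx_eq ▸ le_max_left _ _)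
  intro τ hτ hMτ
  obtain ⟨x, hx, hx_sup⟩ := hK.exists_sSup_image_eq hKne (hslice τ (hIco ⟨hτ.1.le, hτ.2⟩))
  refine ⟨x, hx, ?_⟩
  rcases max_choice L (sSup (g τ '' K)) with h | h
  · exact absurd hMτ (by simp only [M, h]; exact (le_max_left _ _).not_gt)
  · simp only [M, h, hx_sup]

theorem le_of_deriv_nonpos_at_maximizers {X : Type*} [TopologicalSpace X]
    [FirstCountableTopology X] {K : Set X} (hK : IsCompact K) (hKne : K.Nonempty)
    {g g' : ℝ → X → ℝ} {b L : ℝ} (hb : 0 < b)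
    (hg : ContinuousOn ↿g (Icc 0 b ×ˢ K)) (hg' : ContinuousOn ↿g' (Ioc 0 b ×ˢ K))
    (hderiv : ∀ τ ∈ Ioc 0 b, ∀ x ∈ K, HasDerivAt (g · x) (g' τ x) τ)
    (hinit : ∀ x ∈ K, g 0 x < L)
    (hmax : ∀ᵐ s, s ∈ Ioo 0 b → ∀ x ∈ K, (∀ y ∈ K, g s y ≤ g s x) → L ≤ g s x → g' s x ≤ 0) :
    ∀ x ∈ K, g b x ≤ L := by
  have hnear0 : ∀ᶠ a in 𝓝 (0 : ℝ), ∀ x ∈ K, a ∈ Icc 0 b → x ∈ K → g a x < L :=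
    hK.eventually_forall_of_forall_eventually fun x hx =>
      (eventually_nhdsWithin_iff.1 <| (hg (0, x) ⟨left_mem_Icc.2 hb.le, hx⟩).eventually
        (gt_mem_nhds (hinit x hx))).mono fun z hz h₁ h₂ => hz ⟨h₁, h₂⟩
  obtain ⟨a, haL, hab⟩ :=
    ((hnear0.filter_mono (nhdsWithin_le_nhds (s := Ioi 0))).and (Ioo_mem_nhdsGT hb)).exists
  have hsub : Icc a b ⊆ Ioc 0 b := fun s hs => ⟨hab.1.trans_le hs.1, hs.2⟩
  have hdecr := max_sSup_image_le_of_maximizers (L := L) hK hKne hab.2.le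
    (hg.mono (prod_mono (hsub.trans Ioc_subset_Icc_self) subset_rfl))
    (hg'.mono (prod_mono hsub subset_rfl)) (fun τ hτ => hderiv τ (hsub hτ))
    (by filter_upwards [hmax] with s hs hsab using hs ⟨hab.1.trans hsab.1, hsab.2⟩)
  intro x hx
  calc g b x ≤ max L (sSup (g b '' K)) := (le_csSup (hK.bddAbove_image
        (hg.comp (Continuous.prodMk_right b).continuousOn fun y hy => ⟨⟨hb.le, le_rfl⟩, hy⟩))
        (mem_image_of_mem _ hx)).trans (le_max_right _ _)
    _ ≤ max L (sSup (g a '' K)) := hdecr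
    _ = L := max_eq_left <| csSup_le (hKne.image _) <| forall_mem_image.2 fun y hy =>
        (haL y hy ⟨hab.1.le, hab.2.le⟩ hy).le

-- `sSup` of a set that is not bounded above is `0`, hence the `BddAbove` hypotheses below.
noncomputable def weightedSup (η : ℝ → ℝ) (S : Set ℝ) (v : ℝ → ℝ) : ℝ :=
  sSup ((fun x => |v x| / η x) '' S)

theorem abs_le_weightedSup_mul {η v : ℝ → ℝ} {S : Set ℝ}
    (hbdd : BddAbove ((fun x => |v x| / η x) '' S)) {x : ℝ} (hx : x ∈ S) (hηx : 0 < η x) :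
    |v x| ≤ weightedSup η S v * η x :=
  (div_le_iff₀ hηx).1 (le_csSup hbdd (mem_image_of_mem _ hx))

theorem weightedSup_le {η v : ℝ → ℝ} {S : Set ℝ} (hS : S.Nonempty) {Q : ℝ}
    (hη : ∀ x ∈ S, 0 < η x) (hv : ∀ x ∈ S, |v x| ≤ Q * η x) : weightedSup η S v ≤ Q :=
  csSup_le (hS.image _) fun _ ⟨x, hx, hQ⟩ => hQ ▸ (div_le_iff₀ (hη x hx)).2 (hv x hx)

theorem abs_div_mem_upperBounds_image {v η : ℝ → ℝ} {S : Set ℝ} {C m : ℝ} (hm : 0 < m)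
    (hv : ∀ x ∈ S, |v x| ≤ C) (hη : ∀ x ∈ S, m ≤ η x) :
    |C| / m ∈ upperBounds ((fun x => |v x| / η x) '' S) := by
  rintro _ ⟨x, hx, rfl⟩
  exact div_le_div₀ (abs_nonneg C) ((hv x hx).trans (le_abs_self C)) hm (hη x hx)

-- The paper's `max (r₀ s) (r₁ s) (‖f[s]‖_{∞,η} / (σ - ζ))`.
noncomputable def dataLevel (ζ σ μ₀ lam₀ : ℝ) (u ux f : ℝ → ℝ → ℝ) (η η' : ℝ → ℝ) (s : ℝ) : ℝ :=
  max (max (min (|u s 0| / η 0) (|μ₀ * ux s 0 - lam₀ * u s 0| / |μ₀ * η' 0 - lam₀ * η 0|))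
    (|u s 1| / η 1)) (weightedSup η (Ioo 0 1) (f s) / (σ - ζ))

def SolvesAt (a b c f u ut ux uxx : ℝ → ℝ → ℝ) (t : ℝ) : Prop :=
  (∀ x ∈ Ioo (0:ℝ) 1, HasDerivAt (u t) (ux t x) x) ∧
    (∀ x ∈ Ioo (0:ℝ) 1, HasDerivAt (ux t) (uxx t x) x) ∧
    ∀ x ∈ Ioo (0:ℝ) 1, ut t x = a t x * uxx t x + b t x * ux t x + c t x * u t x + f t x

structure IsClassicalSolution (T : ℝ) (a b c f u ut ux uxx : ℝ → ℝ → ℝ) : Prop where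
  continuousOn : ContinuousOn (fun p : ℝ × ℝ => u p.1 p.2) (Icc 0 T ×ˢ Icc 0 1)
  hasDerivAt_time : ∀ t ∈ Ioo 0 T, ∀ x ∈ Icc (0:ℝ) 1, HasDerivAt (u · x) (ut t x) t
  continuousOn_time_deriv : ContinuousOn (fun p : ℝ × ℝ => ut p.1 p.2) (Ioo 0 T ×ˢ Icc 0 1)
  hasDerivWithinAt_zero : ∀ t ∈ Ioo 0 T, HasDerivWithinAt (u t) (ux t 0) (Icc 0 1) 0
  parabolic : ∀ t ∈ Ioo 0 T, ∀ x ∈ Ioo (0:ℝ) 1, 0 ≤ a t x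
  ae_solvesAt : ∀ᵐ t ∂volume.restrict (Ioo 0 T), SolvesAt a b c f u ut ux uxx t

structure IsBarrier (T σ : ℝ) (a b c : ℝ → ℝ → ℝ) (η η' η'' : ℝ → ℝ) : Prop where
  pos : ∀ x ∈ Icc (0:ℝ) 1, 0 < η x
  hasDerivWithinAt : ∀ x ∈ Icc (0:ℝ) 1, HasDerivWithinAt η (η' x) (Icc 0 1) x
  hasDerivWithinAt_deriv : ∀ x ∈ Icc (0:ℝ) 1, HasDerivWithinAt η' (η'' x) (Icc 0 1) x
  supersolution : ∀ t ∈ Ioo 0 T, ∀ x ∈ Ioo (0:ℝ) 1,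
    a t x * η'' x + b t x * η' x + (σ + c t x) * η x ≤ 0

structure DataBoundedBy (ζ σ μ₀ lam₀ : ℝ) (u ux f : ℝ → ℝ → ℝ) (η η' : ℝ → ℝ) (L s : ℝ) :
    Prop where
  robin : exp (ζ * s) *
    min (|u s 0| / η 0) (|μ₀ * ux s 0 - lam₀ * u s 0| / |μ₀ * η' 0 - lam₀ * η 0|) ≤ L
  dirichlet : exp (ζ * s) * |u s 1| ≤ L * η 1
  forcing : ∀ x ∈ Ioo (0:ℝ) 1, exp (ζ * s) * |f s x| ≤ (σ - ζ) * L * η x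

theorem dataBoundedBy_of_le {ζ σ μ₀ lam₀ L s : ℝ} {u ux f : ℝ → ℝ → ℝ} {η η' : ℝ → ℝ}
    (hζ : ζ < σ) (hη : ∀ x ∈ Icc (0:ℝ) 1, 0 < η x)
    (hf : BddAbove ((fun x => |f s x| / η x) '' Ioo 0 1))
    (hL : exp (ζ * s) * dataLevel ζ σ μ₀ lam₀ u ux f η η' s ≤ L) :
    DataBoundedBy ζ σ μ₀ lam₀ u ux f η η' L s := by
  set G := dataLevel ζ σ μ₀ lam₀ u ux f η η' s
  have hE := exp_pos (ζ * s)
  refine ⟨?_, ?_, fun x hx => ?_⟩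
  · exact (mul_le_mul_of_nonneg_left ((le_max_left _ _).trans (le_max_left _ _)) hE.le).trans hL
  · have h1 : (1:ℝ) ∈ Icc (0:ℝ) 1 := right_mem_Icc.2 zero_le_one
    have : |u s 1| ≤ G * η 1 :=
      (div_le_iff₀ (hη 1 h1)).1 ((le_max_right _ _).trans (le_max_left _ _))
    calc exp (ζ * s) * |u s 1| ≤ exp (ζ * s) * (G * η 1) := by gcongr
      _ ≤ L * η 1 := by rw [← mul_assoc]; exact mul_le_mul_of_nonneg_right hL (hη 1 h1).le
  · have hηx := hη x (Ioo_subset_Icc_self hx)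
    have : |f s x| ≤ (σ - ζ) * G * η x := by
      refine (abs_le_weightedSup_mul hf hx hηx).trans (mul_le_mul_of_nonneg_right ?_ hηx.le)
      rw [mul_comm, ← div_le_iff₀ (sub_pos.2 hζ)]
      exact le_max_right _ _
    calc exp (ζ * s) * |f s x| ≤ exp (ζ * s) * ((σ - ζ) * G * η x) := by gcongr
      _ = (σ - ζ) * (exp (ζ * s) * G) * η x := by ring
      _ ≤ (σ - ζ) * L * η x := by gcongr

theorem bddAbove_dataLevel_mul_exp {T ζ σ μ₀ lam₀ t C M m : ℝ} {u ux f : ℝ → ℝ → ℝ}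
    {η η' : ℝ → ℝ} (hζ : ζ ∈ Ico 0 σ) (ht : t ≤ T)
    (hC : ∀ s ∈ Icc 0 T, ∀ x ∈ Icc (0:ℝ) 1, |u s x| ≤ C)
    (hM : ∀ s ∈ Ioc 0 T, ∀ x ∈ Ioo (0:ℝ) 1, |f s x| ≤ M)
    (hm : 0 < m) (hη : ∀ x ∈ Icc (0:ℝ) 1, m ≤ η x) :
    BddAbove ((fun s => dataLevel ζ σ μ₀ lam₀ u ux f η η' s * exp (-ζ * (t - s))) '' Ioc 0 t) := by
  refine ⟨max (|C| / m) (|M| / m / (σ - ζ)), ?_⟩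
  rintro _ ⟨s, hs, rfl⟩
  have hu : |C| / m ∈ upperBounds ((fun x => |u s x| / η x) '' Icc 0 1) :=
    abs_div_mem_upperBounds_image hm (hC s ⟨hs.1.le, hs.2.trans ht⟩) hη
  have hf : weightedSup η (Ioo 0 1) (f s) ≤ |M| / m :=
    csSup_le (nonempty_Ioo.2 zero_lt_one |>.image _) <| abs_div_mem_upperBounds_image hm
      (hM s ⟨hs.1, hs.2.trans ht⟩) fun x hx => hη x (Ioo_subset_Icc_self hx)
  have h0 : (0:ℝ) ∈ Icc (0:ℝ) 1 := left_mem_Icc.2 zero_le_one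
  have h1 : (1:ℝ) ∈ Icc (0:ℝ) 1 := right_mem_Icc.2 zero_le_one
  have hG : 0 ≤ dataLevel ζ σ μ₀ lam₀ u ux f η η' s :=
    (div_nonneg (abs_nonneg _) (hm.le.trans (hη 1 h1))).trans
      ((le_max_right _ _).trans (le_max_left _ _))
  calc dataLevel ζ σ μ₀ lam₀ u ux f η η' s * exp (-ζ * (t - s))
      ≤ dataLevel ζ σ μ₀ lam₀ u ux f η η' s :=
        mul_le_of_le_one_right hG (exp_le_one_iff.2 (by nlinarith [hζ.1, hs.2]))
    _ ≤ max (|C| / m) (|M| / m / (σ - ζ)) := by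
        refine max_le_max (max_le ((min_le_left _ _).trans (hu (mem_image_of_mem _ h0)))
          (hu (mem_image_of_mem _ h1))) ?_
        exact div_le_div_of_nonneg_right hf (sub_pos.2 hζ.2).le

-- `θ` ranges over `[-1, 1]`: the maximum over `θ` of `θ v / η` is `|v| / η`, while each
-- `θ v / η` is differentiable in time.
noncomputable def weightedFamily (ζ : ℝ) (v : ℝ → ℝ → ℝ) (η : ℝ → ℝ) (s : ℝ) (p : ℝ × ℝ) : ℝ :=
  p.1 * (exp (ζ * s) * v s p.2) / η p.2

theorem continuousOn_weightedFamily {ζ : ℝ} {v : ℝ → ℝ → ℝ} {η : ℝ → ℝ} {S Θ : Set ℝ}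
    (hv : ContinuousOn (fun q : ℝ × ℝ => v q.1 q.2) (S ×ˢ Icc 0 1))
    (hη : ContinuousOn η (Icc 0 1)) (hη0 : ∀ x ∈ Icc (0:ℝ) 1, η x ≠ 0) :
    ContinuousOn ↿(weightedFamily ζ v η) (S ×ˢ (Θ ×ˢ Icc 0 1)) := by
  refine ContinuousOn.div ?_ (hη.comp (by fun_prop) fun q hq => hq.2.2) fun q hq => hη0 _ hq.2.2
  exact (continuous_fst.comp continuous_snd).continuousOn.mul
    ((continuous_exp.comp (continuous_const.mul continuous_fst)).continuousOn.mul
      (hv.comp (f := fun q : ℝ × ℝ × ℝ => (q.1, q.2.2)) (by fun_prop)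
        fun q hq => ⟨hq.1, hq.2.2⟩))

theorem hasDerivAt_weightedFamily {ζ s : ℝ} {v v' : ℝ → ℝ → ℝ} {η : ℝ → ℝ} {p : ℝ × ℝ}
    (hv : HasDerivAt (v · p.2) (v' s p.2) s) :
    HasDerivAt (weightedFamily ζ v η · p)
      (weightedFamily ζ (fun s x => v' s x + ζ * v s x) η s p) s := by
  have hexp : HasDerivAt (fun τ => exp (ζ * τ)) (exp (ζ * s) * ζ) s := by
    simpa using ((hasDerivAt_id s).const_mul ζ).exp
  refine (((hexp.fun_mul hv).const_mul p.1).div_const (η p.2)).congr_deriv ?_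
  simp only [weightedFamily]
  ring

theorem weightedFamily_le {ζ s θ x : ℝ} {v : ℝ → ℝ → ℝ} {η : ℝ → ℝ} (hθ : θ ∈ Icc (-1:ℝ) 1)
    (hηx : 0 < η x) : weightedFamily ζ v η s (θ, x) ≤ exp (ζ * s) * |v s x| / η x := by
  have habs : |exp (ζ * s) * v s x| = exp (ζ * s) * |v s x| := by
    rw [abs_mul, abs_of_pos (exp_pos _)]
  rw [weightedFamily, ← habs]
  gcongr
  simpa using mul_le_mul_abs_of_abs_le (w := exp (ζ * s) * v s x) (abs_le.2 hθ)

theorem exp_mul_abs_le_of_weightedFamily_le {ζ t L x : ℝ} {v : ℝ → ℝ → ℝ} {η : ℝ → ℝ}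
    (hηx : 0 < η x) (h : ∀ L' > L, ∀ θ ∈ Icc (-1:ℝ) 1, weightedFamily ζ v η t (θ, x) ≤ L') :
    exp (ζ * t) * |v t x| ≤ L * η x := by
  rw [← div_le_iff₀ hηx]
  refine le_of_forall_gt_imp_ge_of_dense fun L' hL' => ?_
  have h₁ := h L' hL' 1 ⟨by norm_num, le_rfl⟩
  have h₂ := h L' hL' (-1) ⟨le_rfl, by norm_num⟩
  rw [weightedFamily, div_le_iff₀ hηx] at h₁ h₂
  rw [div_le_iff₀ hηx, ← abs_of_pos (exp_pos (ζ * t)), ← abs_mul, abs_le]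
  constructor <;> linarith

section RobinProblem

variable {T σ ζ μ₀ lam₀ : ℝ} {a b c f u ut ux uxx : ℝ → ℝ → ℝ} {η η' η'' : ℝ → ℝ}

theorem timeDeriv_nonpos_at_maximizer (hu : IsClassicalSolution T a b c f u ut ux uxx)
    (hη : IsBarrier T σ a b c η η' η'') (hμ₀ : 0 < μ₀)
    (hrobin : μ₀ * η' 0 - lam₀ * η 0 < 0) (hζ : ζ ≤ σ) {s κ N L x : ℝ} (hs : s ∈ Ioo 0 T)
    (hsol : SolvesAt a b c f u ut ux uxx s) (hdata : DataBoundedBy ζ σ μ₀ lam₀ u ux f η η' L s)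
    (hL : 0 ≤ L) (hLN : L < N) (hκ : |κ| ≤ exp (ζ * s)) (hx : x ∈ Icc (0:ℝ) 1)
    (hle : ∀ y ∈ Icc (0:ℝ) 1, κ * u s y ≤ N * η y) (heq : κ * u s x = N * η x) :
    κ * (ut s x + ζ * u s x) ≤ 0 := by
  obtain ⟨hderiv, hderiv2, hpde⟩ := hsol
  have hmax : IsMaxOn (fun y => κ * u s y - N * η y) (Icc 0 1) x := fun y hy => by
    show κ * u s y - N * η y ≤ κ * u s x - N * η x
    linarith [hle y hy]
  rcases hx.1.eq_or_lt with rfl | hx0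
  · have := le_min_robin_of_isMaxOn zero_lt_one (hu.hasDerivWithinAt_zero s hs)
      (hη.hasDerivWithinAt 0 hx) hmax heq hκ hμ₀.le (hη.pos 0 hx) hrobin
    linarith [hdata.robin]
  rcases hx.2.eq_or_lt with rfl | hx1
  · have : N * η 1 ≤ L * η 1 := by
      calc N * η 1 = κ * u s 1 := heq.symm
        _ ≤ exp (ζ * s) * |u s 1| := mul_le_mul_abs_of_abs_le hκ
        _ ≤ L * η 1 := hdata.dirichlet
    nlinarith [hη.pos 1 hx]
  have hxI : x ∈ Ioo (0:ℝ) 1 := ⟨hx0, hx1⟩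
  have hnhds : Ioo (0:ℝ) 1 ∈ 𝓝 x := Ioo_mem_nhds hx0 hx1
  have hηx := hη.pos x hx
  have hforce : κ * f s x ≤ (σ - ζ) * N * η x := by
    calc κ * f s x ≤ exp (ζ * s) * |f s x| := mul_le_mul_abs_of_abs_le hκ
      _ ≤ (σ - ζ) * L * η x := hdata.forcing x hxI
      _ ≤ (σ - ζ) * N * η x := by gcongr
  -- `e^{ζs} u` solves the equation with `c + ζ` in place of `c`, with barrier margin `σ - ζ`.
  have := linearOp_nonpos_of_isLocalMax_sub (V := fun y => κ * u s y) (V' := fun y => κ * ux s y)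
    (A := a s x) (B := b s x) (C := c s x + ζ) (F := κ * f s x)
    (eventually_of_mem hnhds fun y hy => (hderiv y hy).const_mul κ)
    ((hderiv2 x hxI).const_mul κ)
    (eventually_of_mem hnhds fun y hy =>
      (hη.hasDerivWithinAt y (Ioo_subset_Icc_self hy)).hasDerivAt (Icc_mem_nhds hy.1 hy.2))
    ((hη.hasDerivWithinAt_deriv x hx).hasDerivAt (Icc_mem_nhds hx0 hx1))
    (hmax.localize.isLocalMax (Icc_mem_nhds hx0 hx1)) heq (hu.parabolic s hs x hxI)
    (by linarith) (by convert hη.supersolution s hs x hxI using 2; ring) hforce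
  rw [hpde x hxI]
  linarith

theorem weightedFamily_timeDeriv_nonpos (hu : IsClassicalSolution T a b c f u ut ux uxx)
    (hη : IsBarrier T σ a b c η η' η'') (hμ₀ : 0 < μ₀)
    (hrobin : μ₀ * η' 0 - lam₀ * η 0 < 0) (hζ : ζ ≤ σ) {s L : ℝ} {p : ℝ × ℝ} (hs : s ∈ Ioo 0 T)
    (hsol : SolvesAt a b c f u ut ux uxx s) (hdata : DataBoundedBy ζ σ μ₀ lam₀ u ux f η η' L s)
    (hL : 0 ≤ L) (hp : p ∈ Icc (-1:ℝ) 1 ×ˢ Icc (0:ℝ) 1)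
    (hmax : ∀ q ∈ Icc (-1:ℝ) 1 ×ˢ Icc (0:ℝ) 1, weightedFamily ζ u η s q ≤ weightedFamily ζ u η s p)
    (hLp : L < weightedFamily ζ u η s p) :
    weightedFamily ζ (fun s x => ut s x + ζ * u s x) η s p ≤ 0 := by
  obtain ⟨θ, y⟩ := p
  have hηy := hη.pos y hp.2
  have hN : weightedFamily ζ u η s (θ, y) * η y = θ * exp (ζ * s) * u s y := by
    rw [weightedFamily, div_mul_cancel₀ _ hηy.ne', mul_assoc]
  have hκ : |θ * exp (ζ * s)| ≤ exp (ζ * s) := by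
    rw [abs_mul, abs_of_pos (exp_pos _)]
    exact mul_le_of_le_one_left (exp_pos _).le (abs_le.2 hp.1)
  have hle : ∀ z ∈ Icc (0:ℝ) 1,
      θ * exp (ζ * s) * u s z ≤ weightedFamily ζ u η s (θ, y) * η z := fun z hz => by
    have := hmax (θ, z) ⟨hp.1, hz⟩
    rwa [weightedFamily, div_le_iff₀ (hη.pos z hz), ← mul_assoc] at this
  have := timeDeriv_nonpos_at_maximizer hu hη hμ₀ hrobin hζ hs hsol hdata hL hLp hκ hp.2 hle
    hN.symm
  rw [weightedFamily, ← mul_assoc]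
  exact div_nonpos_of_nonpos_of_nonneg this hηy.le

theorem exp_mul_abs_le_of_lt (hu : IsClassicalSolution T a b c f u ut ux uxx)
    (hη : IsBarrier T σ a b c η η' η'') (hμ₀ : 0 < μ₀)
    (hrobin : μ₀ * η' 0 - lam₀ * η 0 < 0) (hζ : ζ ≤ σ) {t L : ℝ} (ht : t ∈ Ioo 0 T)
    (hinit : ∀ x ∈ Icc (0:ℝ) 1, |u 0 x| ≤ L * η x)
    (hdata : ∀ s ∈ Ioc 0 t, DataBoundedBy ζ σ μ₀ lam₀ u ux f η η' L s) :
    ∀ x ∈ Icc (0:ℝ) 1, exp (ζ * t) * |u t x| ≤ L * η x := by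
  have hηc : ContinuousOn η (Icc 0 1) := fun x hx => (hη.hasDerivWithinAt x hx).continuousWithinAt
  have hη0 : ∀ x ∈ Icc (0:ℝ) 1, η x ≠ 0 := fun x hx => (hη.pos x hx).ne'
  have h01 : (0:ℝ) ∈ Icc (0:ℝ) 1 := left_mem_Icc.2 zero_le_one
  have hL : 0 ≤ L :=
    (mul_nonneg_iff_of_pos_right (hη.pos 0 h01)).1 ((abs_nonneg _).trans (hinit 0 h01))
  have hIoc : Ioc 0 t ⊆ Ioo 0 T := fun s hs => ⟨hs.1, hs.2.trans_lt ht.2⟩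
  have hIcc : Icc 0 t ⊆ Icc 0 T := Icc_subset_Icc_right ht.2.le
  have hbelow : ∀ L' > L, ∀ p ∈ Icc (-1:ℝ) 1 ×ˢ Icc (0:ℝ) 1, weightedFamily ζ u η t p ≤ L' := by
    intro L' hL'
    refine le_of_deriv_nonpos_at_maximizers (isCompact_Icc.prod isCompact_Icc) ⟨(0, 0), by simp⟩
      ht.1 (continuousOn_weightedFamily (hu.continuousOn.mono (prod_mono hIcc subset_rfl)) hηc hη0)
      (continuousOn_weightedFamily (v := fun s x => ut s x + ζ * u s x)
        ((hu.continuousOn_time_deriv.mono (prod_mono hIoc subset_rfl)).add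
          (continuousOn_const.mul (hu.continuousOn.mono
            (prod_mono (Ioc_subset_Icc_self.trans hIcc) subset_rfl)))) hηc hη0)
      (fun τ hτ p hp => hasDerivAt_weightedFamily (hu.hasDerivAt_time τ (hIoc hτ) p.2 hp.2))
      (fun p hp => ?_) ?_
    · calc weightedFamily ζ u η 0 p ≤ exp (ζ * 0) * |u 0 p.2| / η p.2 :=
            weightedFamily_le hp.1 (hη.pos _ hp.2)
        _ ≤ L := by
            rw [mul_zero, exp_zero, one_mul, div_le_iff₀ (hη.pos _ hp.2)]
            exact hinit _ hp.2
        _ < L' := hL'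
    · filter_upwards [(ae_restrict_iff' measurableSet_Ioo).1 hu.ae_solvesAt]
        with s hsol hs p hp hmax hLp
      exact weightedFamily_timeDeriv_nonpos hu hη hμ₀ hrobin hζ (hIoc ⟨hs.1, hs.2.le⟩)
        (hsol (hIoc ⟨hs.1, hs.2.le⟩)) (hdata s ⟨hs.1, hs.2.le⟩) hL hp hmax (hL'.trans_le hLp)
  exact fun x hx => exp_mul_abs_le_of_weightedFamily_le (hη.pos x hx)
    fun L' hL' θ hθ => hbelow L' hL' (θ, x) ⟨hθ, hx⟩

theorem exp_mul_abs_le (hu : IsClassicalSolution T a b c f u ut ux uxx)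
    (hη : IsBarrier T σ a b c η η' η'') (hμ₀ : 0 < μ₀)
    (hrobin : μ₀ * η' 0 - lam₀ * η 0 < 0) (hζ : ζ ≤ σ) {t L : ℝ} (ht : t ∈ Ioc 0 T)
    (hinit : ∀ x ∈ Icc (0:ℝ) 1, |u 0 x| ≤ L * η x)
    (hdata : ∀ s ∈ Ioc 0 t, DataBoundedBy ζ σ μ₀ lam₀ u ux f η η' L s) :
    ∀ x ∈ Icc (0:ℝ) 1, exp (ζ * t) * |u t x| ≤ L * η x := by
  rcases ht.2.lt_or_eq with hlt | rfl
  · exact exp_mul_abs_le_of_lt hu hη hμ₀ hrobin hζ ⟨ht.1, hlt⟩ hinit hdata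
  intro x hx
  have hcont : ContinuousWithinAt (fun τ => exp (ζ * τ) * |u τ x|) (Ioo 0 t) t :=
    ((continuous_exp.comp (continuous_const_mul ζ)).continuousWithinAt).mul
      (((hu.continuousOn.comp (s := Icc 0 t) (continuous_id.prodMk continuous_const).continuousOn
        fun τ hτ => ⟨hτ, hx⟩) t ⟨ht.1.le, le_rfl⟩).mono Ioo_subset_Icc_self).abs
  have : (𝓝[Ioo 0 t] t).NeBot := by rw [nhdsWithin_Ioo_eq_nhdsLT ht.1]; infer_instance
  refine le_of_tendsto hcont (eventually_nhdsWithin_of_forall fun τ hτ => ?_)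
  exact exp_mul_abs_le_of_lt hu hη hμ₀ hrobin hζ hτ hinit
    (fun s hs => hdata s ⟨hs.1, hs.2.trans hτ.2.le⟩) x hx

theorem abs_le_mul_of_dataLevel_le (hu : IsClassicalSolution T a b c f u ut ux uxx)
    (hη : IsBarrier T σ a b c η η' η'') (hμ₀ : 0 < μ₀)
    (hrobin : μ₀ * η' 0 - lam₀ * η 0 < 0) (hζ : ζ < σ) {t Q : ℝ} (ht : t ∈ Ioc 0 T)
    (hu₀ : BddAbove ((fun x => |u 0 x| / η x) '' Icc 0 1))
    (hf : ∀ s ∈ Ioc 0 t, BddAbove ((fun x => |f s x| / η x) '' Ioo 0 1))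
    (hQ₀ : exp (-ζ * t) * weightedSup η (Icc 0 1) (u 0) ≤ Q)
    (hQ : ∀ s ∈ Ioc 0 t, dataLevel ζ σ μ₀ lam₀ u ux f η η' s * exp (-ζ * (t - s)) ≤ Q) :
    ∀ x ∈ Icc (0:ℝ) 1, |u t x| ≤ Q * η x := by
  have hshift : ∀ r q, exp (ζ * t) * (q * exp (-ζ * r)) = exp (ζ * (t - r)) * q := fun r q => by
    rw [mul_left_comm, ← exp_add]; ring_nf
  have hbound := exp_mul_abs_le (L := exp (ζ * t) * Q) hu hη hμ₀ hrobin hζ.le ht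
    (fun x hx => ?_) (fun s hs => dataBoundedBy_of_le hζ hη.pos (hf s hs) ?_)
  · intro x hx
    exact le_of_mul_le_mul_left ((hbound x hx).trans_eq (mul_assoc _ _ _)) (exp_pos _)
  · calc |u 0 x| ≤ weightedSup η (Icc 0 1) (u 0) * η x :=
          abs_le_weightedSup_mul hu₀ hx (hη.pos x hx)
      _ ≤ exp (ζ * t) * Q * η x := by
        gcongr
        · exact (hη.pos x hx).le
        · have := mul_le_mul_of_nonneg_left hQ₀ (exp_pos (ζ * t)).le
          rwa [← mul_assoc, ← exp_add, neg_mul, add_neg_cancel, exp_zero, one_mul] at this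
  · have := mul_le_mul_of_nonneg_left (hQ s hs) (exp_pos (ζ * t)).le
    rwa [hshift, sub_sub_cancel] at this

end RobinProblem

theorem cor2_3_case2_general
    (T : ℝ)
    (a b c f : ℝ → ℝ → ℝ)
    (hf_bdd : ∃ M : ℝ, ∀ t ∈ Set.Ioc (0:ℝ) T, ∀ x ∈ Set.Ioo (0:ℝ) 1, |f t x| ≤ M)
    (u ut ux uxx : ℝ → ℝ → ℝ)
    (hu_cont : ContinuousOn (fun p : ℝ × ℝ => u p.1 p.2) (Set.Icc 0 T ×ˢ Set.Icc 0 1))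
    (hut : ∀ t ∈ Set.Ioo (0:ℝ) T, ∀ x ∈ Set.Icc (0:ℝ) 1,
      HasDerivAt (fun τ => u τ x) (ut t x) t)
    (hut_cont : ContinuousOn (fun p : ℝ × ℝ => ut p.1 p.2) (Set.Ioo 0 T ×ˢ Set.Icc 0 1))
    (hux_bd : ∀ t ∈ Set.Ioc (0:ℝ) T,
      HasDerivWithinAt (u t) (ux t 0) (Set.Icc 0 1) 0 ∧
      HasDerivWithinAt (u t) (ux t 1) (Set.Icc 0 1) 1)
    (hC2_pde : ∀ᵐ t ∂(volume.restrict (Set.Ioo 0 T)),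
      (∀ x ∈ Set.Ioo (0:ℝ) 1, HasDerivAt (u t) (ux t x) x) ∧
      (∀ x ∈ Set.Ioo (0:ℝ) 1, HasDerivAt (ux t) (uxx t x) x) ∧
      ContinuousOn (uxx t) (Set.Ioo 0 1) ∧
      (∀ x ∈ Set.Ioo (0:ℝ) 1,
        ut t x = a t x * uxx t x + b t x * ux t x + c t x * u t x + f t x))
    (ha : ∀ t ∈ Set.Ioo (0:ℝ) T, ∀ x ∈ Set.Ioo (0:ℝ) 1, 0 ≤ a t x)
    (μ₀ lam₀ : ℝ) (hμ₀ : 0 < μ₀)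
    (σ : ℝ)
    (η η' η'' : ℝ → ℝ)
    (hη_pos : ∀ x ∈ Set.Icc (0:ℝ) 1, 0 < η x)
    (hη1 : ∀ x ∈ Set.Icc (0:ℝ) 1, HasDerivWithinAt η (η' x) (Set.Icc 0 1) x)
    (hη2 : ∀ x ∈ Set.Icc (0:ℝ) 1, HasDerivWithinAt η' (η'' x) (Set.Icc 0 1) x)
    (hcond : ∀ t ∈ Set.Ioo (0:ℝ) T, ∀ x ∈ Set.Ioo (0:ℝ) 1,
      a t x * η'' x + b t x * η' x + (σ + c t x) * η x ≤ 0)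
    (hbc0 : μ₀ * η' 0 - lam₀ * η 0 < 0) :
    ∀ ζ ∈ Set.Ico (0:ℝ) σ, ∀ t ∈ Set.Ioc (0:ℝ) T,
      sSup ((fun x => |u t x| / η x) '' Set.Icc 0 1) ≤
        max (Real.exp (-ζ * t) * sSup ((fun x => |u 0 x| / η x) '' Set.Icc 0 1))
          (sSup ((fun s =>
              max (max
                  (min (|u s 0| / η 0) (|μ₀ * ux s 0 - lam₀ * u s 0| / |μ₀ * η' 0 - lam₀ * η 0|))
                  (|u s 1| / η 1))
                (sSup ((fun x => |f s x| / η x) '' Set.Ioo 0 1) / (σ - ζ)) *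
              Real.exp (-ζ * (t - s))) '' Set.Ioc 0 t)) := by
  intro ζ hζ t ht
  have hu : IsClassicalSolution T a b c f u ut ux uxx :=
    ⟨hu_cont, hut, hut_cont, fun s hs => (hux_bd s (Ioo_subset_Ioc_self hs)).1, ha,
      hC2_pde.mono fun s h => ⟨h.1, h.2.1, h.2.2.2⟩⟩
  have hη : IsBarrier T σ a b c η η' η'' := ⟨hη_pos, hη1, hη2, hcond⟩
  obtain ⟨x₀, hx₀, hmin⟩ := isCompact_Icc.exists_isMinOn (nonempty_Icc.2 zero_le_one)
    fun x hx => (hη1 x hx).continuousWithinAt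
  obtain ⟨C, hC⟩ := (isCompact_Icc.prod isCompact_Icc).exists_bound_of_continuousOn hu_cont
  have hCu : ∀ s ∈ Icc 0 T, ∀ x ∈ Icc (0:ℝ) 1, |u s x| ≤ C := fun s hs x hx => hC (s, x) ⟨hs, hx⟩
  obtain ⟨M, hM⟩ := hf_bdd
  have hu₀ : BddAbove ((fun x => |u 0 x| / η x) '' Icc 0 1) :=
    ⟨_, abs_div_mem_upperBounds_image (hη_pos x₀ hx₀) (hCu 0 ⟨le_rfl, ht.1.le.trans ht.2⟩)
      fun x hx => hmin hx⟩
  have hf : ∀ s ∈ Ioc 0 t, BddAbove ((fun x => |f s x| / η x) '' Ioo 0 1) := fun s hs =>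
    ⟨_, abs_div_mem_upperBounds_image (hη_pos x₀ hx₀) (hM s ⟨hs.1, hs.2.trans ht.2⟩)
      fun x hx => hmin (Ioo_subset_Icc_self hx)⟩
  have hK := bddAbove_dataLevel_mul_exp (μ₀ := μ₀) (lam₀ := lam₀) (ux := ux) (η' := η') hζ ht.2
    hCu hM (hη_pos x₀ hx₀) fun x hx => hmin hx
  exact weightedSup_le (nonempty_Icc.2 zero_le_one) hη_pos <|
    abs_le_mul_of_dataLevel_le hu hη hμ₀ hbc0 hζ.2 ht hu₀ hf (le_max_left _ _)
      fun s hs => (le_csSup hK (mem_image_of_mem _ hs)).trans (le_max_right _ _)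

/-- **Corollary 2.3** (Karafyllis–Krstic), case (2.9): Robin condition at x = 0. -/
theorem cor2_3_case2
    (T : ℝ) (hT : 0 < T)
    (a b c f : ℝ → ℝ → ℝ)
    (hf_bdd : ∃ M : ℝ, ∀ t ∈ Set.Ioc (0:ℝ) T, ∀ x ∈ Set.Ioo (0:ℝ) 1, |f t x| ≤ M)
    (u ut ux uxx : ℝ → ℝ → ℝ)
    (hu_cont : ContinuousOn (fun p : ℝ × ℝ => u p.1 p.2) (Set.Icc 0 T ×ˢ Set.Icc 0 1))
    (hut : ∀ t ∈ Set.Ioo (0:ℝ) T, ∀ x ∈ Set.Icc (0:ℝ) 1,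
      HasDerivAt (fun τ => u τ x) (ut t x) t)
    (hut_cont : ContinuousOn (fun p : ℝ × ℝ => ut p.1 p.2) (Set.Ioo 0 T ×ˢ Set.Icc 0 1))
    (hux_bd : ∀ t ∈ Set.Ioc (0:ℝ) T,
      HasDerivWithinAt (u t) (ux t 0) (Set.Icc 0 1) 0 ∧
      HasDerivWithinAt (u t) (ux t 1) (Set.Icc 0 1) 1)
    (hC2_pde : ∀ᵐ t ∂(volume.restrict (Set.Ioo 0 T)),
      (∀ x ∈ Set.Ioo (0:ℝ) 1, HasDerivAt (u t) (ux t x) x) ∧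
      (∀ x ∈ Set.Ioo (0:ℝ) 1, HasDerivAt (ux t) (uxx t x) x) ∧
      ContinuousOn (uxx t) (Set.Ioo 0 1) ∧
      (∀ x ∈ Set.Ioo (0:ℝ) 1,
        ut t x = a t x * uxx t x + b t x * ux t x + c t x * u t x + f t x))
    (ha : ∀ t ∈ Set.Ioo (0:ℝ) T, ∀ x ∈ Set.Ioo (0:ℝ) 1, 0 ≤ a t x)
    (μ₀ lam₀ : ℝ) (hμ₀ : 0 < μ₀)
    (σ : ℝ) (hσ : 0 < σ)
    (η η' η'' : ℝ → ℝ)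
    (hη_pos : ∀ x ∈ Set.Icc (0:ℝ) 1, 0 < η x)
    (hη1 : ∀ x ∈ Set.Icc (0:ℝ) 1, HasDerivWithinAt η (η' x) (Set.Icc 0 1) x)
    (hη2 : ∀ x ∈ Set.Icc (0:ℝ) 1, HasDerivWithinAt η' (η'' x) (Set.Icc 0 1) x)
    (hη''_cont : ContinuousOn η'' (Set.Icc 0 1))
    (hcond : ∀ t ∈ Set.Ioo (0:ℝ) T, ∀ x ∈ Set.Ioo (0:ℝ) 1,
      a t x * η'' x + b t x * η' x + (σ + c t x) * η x ≤ 0)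
    (hbc0 : μ₀ * η' 0 - lam₀ * η 0 < 0) :
    ∀ ζ ∈ Set.Ico (0:ℝ) σ, ∀ t ∈ Set.Ioc (0:ℝ) T,
      sSup ((fun x => |u t x| / η x) '' Set.Icc 0 1) ≤
        max (Real.exp (-ζ * t) * sSup ((fun x => |u 0 x| / η x) '' Set.Icc 0 1))
          (sSup ((fun s =>
              max (max
                  (min (|u s 0| / η 0) (|μ₀ * ux s 0 - lam₀ * u s 0| / |μ₀ * η' 0 - lam₀ * η 0|))
                  (|u s 1| / η 1))
                (sSup ((fun x => |f s x| / η x) '' Set.Ioo 0 1) / (σ - ζ)) *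
              Real.exp (-ζ * (t - s))) '' Set.Ioc 0 t)) :=
  cor2_3_case2_general T a b c f hf_bdd u ut ux uxx hu_cont hut hut_cont hux_bd hC2_pde ha μ₀ lam₀
    hμ₀ σ η η' η'' hη_pos hη1 hη2 hcond hbc0
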